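/- Let Σd ∈ S⁺⁺ₙ and suppose ζ ∈ ℝ^{n×p} satisfies ζζᵀ ≻ 0. Then the gradient of g(ζ) := tr((Σd^{1/2} ζ ζᵀ Σd^{1/2})^{1/2}) with respect to ζ exists and equals Σd^{1/2} (Σd^{1/2} ζ ζᵀ Σd^{1/2})^{−1/2} Σd^{1/2} ζ. -/

import Mathlib

open Matrix Classical

noncomputable def psqrt {n : ℕ} (A : Matrix (Fin n) (Fin n) ℝ) : Matrix (Fin n) (Fin n) ℝ :=
  if h : A.PosSemidef then
    (h.1.eigenvectorUnitary : Matrix (Fin n) (Fin n) ℝ) * diagonal ((↑) ∘ (√·) ∘ h.1.eigenvalues)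
      * (star h.1.eigenvectorUnitary : Matrix (Fin n) (Fin n) ℝ) else 0

attribute [local instance] Matrix.frobeniusNormedAddCommGroup Matrix.frobeniusNormedSpace

/-!
Write `A = Σd^{1/2}` and `Y₀ = (A ζ ζᵀ A)^{1/2}`. Near the positive definite matrix `Y₀` the
squaring map `Y ↦ Y * Y` has invertible derivative `K ↦ Y₀ K + K Y₀` (a `K` in its kernel
anticommutes with `Y₀`, hence commutes with `Y₀²` and so with `Y₀ = √(Y₀²)`, which forces
`K = 0`). By the inverse function theorem it has a differentiable local inverse, and on symmetric
matrices near `Y₀²` this local inverse is the positive square root, because positive definiteness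
is open among symmetric matrices (upper hemicontinuity of the spectrum). Its derivative `W` in a
direction `D` solves `Y₀ W + W Y₀ = D`, so `2 tr W = tr (Y₀⁻¹ D)`; for
`D = A (M ζᵀ + ζ Mᵀ) A` this is `2 tr ((A Y₀⁻¹ A ζ)ᵀ M)`.
-/

open Topology Filter Set
open scoped MatrixOrder ComplexOrder

attribute [local instance] Matrix.frobeniusNormedRing Matrix.frobeniusNormedAlgebra

namespace Matrix

variable {ι κ 𝕜 : Type*} [Fintype ι] [Fintype κ] [RCLike 𝕜]

lemma IsSymm.trace_mul_add_mul_transpose {R : Type*} [CommRing R] {S : Matrix ι ι R}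
    (hS : S.IsSymm) (M ζ : Matrix ι κ R) :
    (S * (M * ζᵀ + ζ * Mᵀ)).trace = 2 * ((S * ζ)ᵀ * M).trace := by
  have h₁ : (S * (M * ζᵀ)).trace = ((S * ζ)ᵀ * M).trace := by
    rw [transpose_mul, hS.eq, ← Matrix.mul_assoc, trace_mul_comm, Matrix.mul_assoc]
  have h₂ : (S * (ζ * Mᵀ)).trace = (S * (M * ζᵀ)).trace := by
    rw [← trace_transpose, transpose_mul, transpose_mul, transpose_transpose, hS.eq, trace_mul_comm]
  rw [Matrix.mul_add, trace_add, h₂, h₁, two_mul]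

lemma two_mul_trace_eq_of_mul_add_mul_eq [DecidableEq ι] {R : Type*} [CommRing R]
    {Y W D : Matrix ι ι R} (hY : IsUnit Y) (h : Y * W + W * Y = D) :
    2 * W.trace = (Y⁻¹ * D).trace := by
  have hdet := (isUnit_iff_isUnit_det Y).1 hY
  rw [← h, Matrix.mul_add, trace_add, ← Matrix.mul_assoc, nonsing_inv_mul _ hdet, Matrix.one_mul,
    trace_mul_comm, Matrix.mul_assoc, mul_nonsing_inv _ hdet, Matrix.mul_one, two_mul]

lemma PosDef.eventually_posDef [DecidableEq ι] {Y₀ : Matrix ι ι 𝕜} (hY₀ : Y₀.PosDef) :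
    ∀ᶠ Y in 𝓝 Y₀, Y.IsHermitian → Y.PosDef := by
  have hspec : spectrum ℝ Y₀ ⊆ Ioi 0 := fun _ hx ↦ hY₀.isStrictlyPositive.spectrum_pos hx
  filter_upwards [upperHemicontinuousAt_iff_forall_isOpen.1
    ((upperHemicontinuous_spectrum ℝ _).upperHemicontinuousAt Y₀) _ isOpen_Ioi hspec]
    with Y hY hYh
  exact hYh.posDef_iff_eigenvalues_pos.2 fun i ↦ hY (hYh.eigenvalues_mem_spectrum_real i)

lemma PosDef.eq_zero_of_mul_add_mul_eq_zero [DecidableEq ι] {Y K : Matrix ι ι 𝕜} (hY : Y.PosDef)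
    (h : Y * K + K * Y = 0) : K = 0 := by
  have hsq : Commute (Y * Y) K := by
    have : Y * Y * K - K * (Y * Y) = Y * (Y * K + K * Y) - (Y * K + K * Y) * Y := by noncomm_ring
    rwa [h, Matrix.mul_zero, Matrix.zero_mul, sub_zero, sub_eq_zero] at this
  have hcomm : Commute Y K := by
    simpa [← CFC.sqrt_eq_cfc, CFC.sqrt_mul_self Y hY.posSemidef.nonneg] using
      hsq.cfc_nnreal NNReal.sqrt
  have : Y * K + Y * K = 0 := by rwa [← hcomm.eq] at h
  have : Y * K = 0 := by simpa [← two_smul 𝕜] using this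
  exact hY.isUnit.mul_right_eq_zero.1 this

noncomputable def sylvester [DecidableEq ι] (Y : Matrix ι ι 𝕜) :
    Matrix ι ι 𝕜 →L[𝕜] Matrix ι ι 𝕜 :=
  (LinearMap.mulLeft 𝕜 Y + LinearMap.mulRight 𝕜 Y).toContinuousLinearMap

lemma hasStrictFDerivAt_mul_self [DecidableEq ι] (Y : Matrix ι ι 𝕜) :
    HasStrictFDerivAt (fun X : Matrix ι ι 𝕜 ↦ X * X) (sylvester Y) Y :=
  ((hasStrictFDerivAt_id Y).mul' (hasStrictFDerivAt_id Y)).congr_fderiv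
    (ContinuousLinearMap.ext fun _ ↦ rfl)

lemma PosDef.injective_sylvester [DecidableEq ι] {Y : Matrix ι ι 𝕜} (hY : Y.PosDef) :
    Function.Injective (sylvester Y) :=
  (injective_iff_map_eq_zero _).2 fun _ hK ↦ hY.eq_zero_of_mul_add_mul_eq_zero hK

noncomputable def PosDef.sylvesterEquiv [DecidableEq ι] {Y : Matrix ι ι 𝕜} (hY : Y.PosDef) :
    Matrix ι ι 𝕜 ≃L[𝕜] Matrix ι ι 𝕜 :=
  (LinearEquiv.ofInjectiveEndo _ hY.injective_sylvester).toContinuousLinearEquiv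

lemma hasFDerivAt_mul_mul_transpose_mul (A : Matrix ι ι 𝕜) (ζ : Matrix ι κ 𝕜) :
    ∃ Φ' : Matrix ι κ 𝕜 →L[𝕜] Matrix ι ι 𝕜, HasFDerivAt (fun M ↦ A * M * Mᵀ * A) Φ' ζ ∧
      ∀ M, Φ' M = A * (M * ζᵀ + ζ * Mᵀ) * A := by
  let L₁ : Matrix ι κ 𝕜 →L[𝕜] Matrix ι κ 𝕜 := (mulLeftLinearMap κ 𝕜 A).toContinuousLinearMap
  let L₂ : Matrix ι κ 𝕜 →L[𝕜] Matrix κ ι 𝕜 :=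
    (mulRightLinearMap κ 𝕜 A ∘ₗ (transposeLinearEquiv ι κ 𝕜 𝕜).toLinearMap).toContinuousLinearMap
  have h := (mulLinearMap 𝕜).toContinuousBilinearMap.hasFDerivAt_of_bilinear
    L₁.hasFDerivAt L₂.hasFDerivAt (x := ζ)
  refine ⟨_, h.congr_of_eventuallyEq (.of_forall fun M ↦ ?_), fun M ↦ ?_⟩
  · simp [L₁, L₂, Matrix.mul_assoc]
  · change A * ζ * (Mᵀ * A) + A * M * (ζᵀ * A) = _
    simp only [Matrix.mul_add, Matrix.add_mul, Matrix.mul_assoc, add_comm]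

end Matrix

section psqrt

variable {n : ℕ}

lemma psqrt_eq_sqrt {A : Matrix (Fin n) (Fin n) ℝ} (hA : A.PosSemidef) :
    psqrt A = CFC.sqrt A := by
  rw [psqrt, dif_pos hA, CFC.sqrt_eq_cfc, cfc_nnreal_eq_real _ A, hA.1.cfc_eq]
  simp only [IsHermitian.cfc, Unitary.conjStarAlgAut_apply]
  congr 3
  funext i
  simp [hA.eigenvalues_nonneg i]

lemma psqrt_mul_self {A : Matrix (Fin n) (Fin n) ℝ} (hA : A.PosSemidef) :
    psqrt A * psqrt A = A := by
  rw [psqrt_eq_sqrt hA, CFC.sqrt_mul_sqrt_self A hA.nonneg]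

lemma Matrix.PosDef.posDef_psqrt {A : Matrix (Fin n) (Fin n) ℝ} (hA : A.PosDef) :
    (psqrt A).PosDef := by
  rw [psqrt_eq_sqrt hA.posSemidef]
  exact (IsStrictlyPositive.sqrt A hA.isStrictlyPositive).posDef

lemma psqrt_eq_of_mul_self {X W : Matrix (Fin n) (Fin n) ℝ} (hW : W.PosSemidef) (h : W * W = X) :
    psqrt X = W := by
  subst h
  have hWW : (W * W).PosSemidef := by
    simpa only [hW.1.eq] using posSemidef_conjTranspose_mul_self W
  rw [psqrt_eq_sqrt hWW, CFC.sqrt_mul_self W hW.nonneg]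

theorem Matrix.PosDef.hasFDerivWithinAt_psqrt {X₀ : Matrix (Fin n) (Fin n) ℝ}
    (hX₀ : X₀.PosDef) :
    HasFDerivWithinAt psqrt
      (hX₀.posDef_psqrt.sylvesterEquiv.symm : Matrix (Fin n) (Fin n) ℝ →L[ℝ] _)
      {X | X.IsHermitian} X₀ := by
  set Y₀ := psqrt X₀
  have hY₀ : Y₀.PosDef := hX₀.posDef_psqrt
  have hsq : HasStrictFDerivAt (fun Y : Matrix (Fin n) (Fin n) ℝ ↦ Y * Y)
        (hY₀.sylvesterEquiv : Matrix (Fin n) (Fin n) ℝ →L[ℝ] Matrix (Fin n) (Fin n) ℝ) Y₀ :=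
    hasStrictFDerivAt_mul_self Y₀
  have hY₀X₀ : Y₀ * Y₀ = X₀ := psqrt_mul_self hX₀.posSemidef
  set g := hsq.localInverse _ _ _
  have hg := hsq.to_localInverse
  have hgX₀ : g (Y₀ * Y₀) = Y₀ := hsq.localInverse_apply_image
  have hgt := hsq.localInverse_tendsto
  have hright := hsq.eventually_right_inverse
  rw [hY₀X₀] at hg hgX₀ hgt hright
  refine hg.hasFDerivAt.hasFDerivWithinAt.congr_of_eventuallyEq ?_ hgX₀.symm
  have hgt' : Tendsto (fun X ↦ (g X)ᵀ) (𝓝 X₀) (𝓝 Y₀) := by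
    have := (continuous_id.matrix_transpose.tendsto Y₀).comp hgt
    rw [id, (isHermitian_iff_isSymm.1 hY₀.1).eq] at this
    exact this
  filter_upwards [self_mem_nhdsWithin, nhdsWithin_le_nhds hright,
    nhdsWithin_le_nhds (hgt.eventually hY₀.eventually_posDef),
    nhdsWithin_le_nhds (hgt'.eventually hsq.eventually_left_inverse)] with X hX hgX hpd hgXt
  -- `(g X)ᵀ` is another square root of `X` close to `Y₀`, so the local inverse returns it
  have hsymm : (g X)ᵀ = g X := by
    rw [← hgXt, ← transpose_mul, hgX, (isHermitian_iff_isSymm.1 hX).eq]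
  exact psqrt_eq_of_mul_self (hpd (isHermitian_iff_isSymm.2 hsymm)).posSemidef hgX

end psqrt

/-- Gradient of `g(ζ) = tr((Σd^{1/2} ζ ζᵀ Σd^{1/2})^{1/2})` at a point with `ζζᵀ ≻ 0`:
there is a Fréchet derivative, and it is represented (w.r.t. the Frobenius inner product
`⟨A,B⟩ = tr(AᵀB)`) by `Σd^{1/2} (Σd^{1/2} ζ ζᵀ Σd^{1/2})^{-1/2} Σd^{1/2} ζ`. -/
theorem gradient_trace_sqrt {n p : ℕ} (Sd : Matrix (Fin n) (Fin n) ℝ) (hSd : Sd.PosDef)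
    (ζ : Matrix (Fin n) (Fin p) ℝ) (hζ : (ζ * ζᵀ).PosDef) :
    ∃ L : Matrix (Fin n) (Fin p) ℝ →L[ℝ] ℝ,
      HasFDerivAt (fun M : Matrix (Fin n) (Fin p) ℝ =>
          (psqrt (psqrt Sd * M * Mᵀ * psqrt Sd)).trace) L ζ
      ∧ ∀ M : Matrix (Fin n) (Fin p) ℝ,
          L M = (((psqrt Sd * (psqrt (psqrt Sd * ζ * ζᵀ * psqrt Sd))⁻¹
                    * psqrt Sd * ζ))ᵀ * M).trace := by
  set A := psqrt Sd
  have hA : A.PosDef := hSd.posDef_psqrt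
  have hAsymm : A.IsSymm := isHermitian_iff_isSymm.1 hA.1
  have hX : (A * ζ * ζᵀ * A).PosDef := by
    simpa only [Matrix.mul_assoc] using (IsStrictlyPositive.conjugate_of_isUnit_of_isSelfAdjoint
      _ _ hA.isUnit hA.1 hζ.isStrictlyPositive).posDef
  set Y := psqrt (A * ζ * ζᵀ * A)
  have hY : Y.PosDef := hX.posDef_psqrt
  obtain ⟨Φ', hΦ, hΦ'⟩ := hasFDerivAt_mul_mul_transpose_mul A ζ
  let tr : Matrix (Fin n) (Fin n) ℝ →L[ℝ] ℝ := (traceLinearMap _ ℝ ℝ).toContinuousLinearMap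
  refine ⟨tr ∘L (hY.sylvesterEquiv.symm : _ →L[ℝ] _) ∘L Φ', ?_, fun M ↦ ?_⟩
  · have hsymm (M : Matrix (Fin n) (Fin p) ℝ) : (A * M * Mᵀ * A).IsHermitian := by
      simp [isHermitian_iff_isSymm, IsSymm, hAsymm.eq, Matrix.mul_assoc]
    have hsqrt : HasFDerivAt (fun M ↦ psqrt (A * M * Mᵀ * A))
        ((hY.sylvesterEquiv.symm : _ →L[ℝ] _) ∘L Φ') ζ :=
      HasFDerivWithinAt.comp_hasFDerivAt (g := psqrt) ζ hX.hasFDerivWithinAt_psqrt hΦ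
        (.of_forall hsymm)
    exact tr.hasFDerivAt.comp ζ hsqrt
  · have h₂ := two_mul_trace_eq_of_mul_add_mul_eq hY.isUnit
      (hY.sylvesterEquiv.apply_symm_apply (Φ' M))
    have hS : (A * Y⁻¹ * A).IsSymm := by
      simp [IsSymm, transpose_nonsing_inv, hAsymm.eq, (isHermitian_iff_isSymm.1 hY.1).eq,
        Matrix.mul_assoc]
    rw [hΦ', ← Matrix.mul_assoc, trace_mul_comm, ← Matrix.mul_assoc, ← Matrix.mul_assoc,
      hS.trace_mul_add_mul_transpose] at h₂
    change (hY.sylvesterEquiv.symm (Φ' M)).trace = _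
    rw [hΦ']
    linarith
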